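/- arXiv:0806.0373 — 4 statements merged into one kernel-verified Lean document; each statement's English description precedes it below -/
import Mathlib

section
/- For all integers i ≥ 1 and k ≥ 1, put d = 2i(2k+1) and w = (w_0,…,w_4) = (1, 2i, i(2k+1), i(2k+1), i(2k+1)). Then: (a) the polynomial f_i = z_0^{2i(2k+1)} + z_1^{2k+1} + z_2^2 + z_3^2 + z_4^2 ∈ ℂ[z_0,…,z_4] is weighted homogeneous of degree d with weights w; (b) the index I = (w_0+w_1+w_2+w_3+w_4) − d equals 2ik + 3i + 1; and (c) I > 4 = n · min_i w_i (here n = 4 and min_i w_i = 1), so the Lichnerowicz obstruction I > n·min_i w_i holds for every member of this family. -/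
/-!
`f_i` is the Brieskorn–Pham polynomial `∑ z_j ^ a_j` with exponents `a = (2i(2k+1), 2k+1, 2, 2, 2)`,
and each `a_j w_j` equals `d`, which is all weighted homogeneity requires. The weight `w_0 = 1`
is the minimum, and the index `|w| - d = 2ik + 3i + 1` exceeds `4` once `i, k ≥ 1`.
-/

open MvPolynomial Finset

theorem MvPolynomial.isWeightedHomogeneous_sum_X_pow {σ R M : Type*} [CommSemiring R]
    [AddCommMonoid M] (s : Finset σ) (w : σ → M) (a : σ → ℕ) {d : M}
    (h : ∀ j ∈ s, a j • w j = d) :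
    IsWeightedHomogeneous w (∑ j ∈ s, (X j : MvPolynomial σ R) ^ a j) d :=
  IsWeightedHomogeneous.sum s _ d fun j hj => h j hj ▸ (isWeightedHomogeneous_X R w j).pow (a j)

section DurfeeKauffman

variable (i k : ℕ)

def durfeeKauffmanWeights : Fin 5 → ℕ :=
  ![1, 2 * i, i * (2 * k + 1), i * (2 * k + 1), i * (2 * k + 1)]

def durfeeKauffmanExponents : Fin 5 → ℕ :=
  ![2 * i * (2 * k + 1), 2 * k + 1, 2, 2, 2]

theorem durfeeKauffmanExponents_smul_weights (j : Fin 5) :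
    durfeeKauffmanExponents i k j • durfeeKauffmanWeights i k j = 2 * i * (2 * k + 1) := by
  fin_cases j <;>
    simp only [durfeeKauffmanExponents, durfeeKauffmanWeights, Fin.zero_eta, Fin.mk_one,
      Fin.reduceFinMk, Matrix.cons_val, Matrix.cons_val_zero, Matrix.cons_val_one, smul_eq_mul] <;>
    ring

theorem isWeightedHomogeneous_durfeeKauffman (R : Type*) [CommSemiring R] :
    IsWeightedHomogeneous (durfeeKauffmanWeights i k)
      ((X 0) ^ (2 * i * (2 * k + 1)) + (X 1) ^ (2 * k + 1) + (X 2) ^ 2 + (X 3) ^ 2 + (X 4) ^ 2 :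
        MvPolynomial (Fin 5) R)
      (2 * i * (2 * k + 1)) := by
  have hsum : ((X 0) ^ (2 * i * (2 * k + 1)) + (X 1) ^ (2 * k + 1) + (X 2) ^ 2 + (X 3) ^ 2 +
      (X 4) ^ 2 : MvPolynomial (Fin 5) R) = ∑ j, X j ^ durfeeKauffmanExponents i k j := by
    simp [Fin.sum_univ_five, durfeeKauffmanExponents]
  rw [hsum]
  exact isWeightedHomogeneous_sum_X_pow _ _ _ fun j _ => durfeeKauffmanExponents_smul_weights i k j

theorem sum_durfeeKauffmanWeights :
    ∑ j, durfeeKauffmanWeights i k j = 2 * i * (2 * k + 1) + (2 * i * k + 3 * i + 1) := by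
  simp only [durfeeKauffmanWeights, Fin.sum_univ_five, Matrix.cons_val_zero, Matrix.cons_val_one,
    Matrix.cons_val]
  ring

theorem durfeeKauffman_index :
    (∑ j, durfeeKauffmanWeights i k j) - 2 * i * (2 * k + 1) = 2 * i * k + 3 * i + 1 := by
  rw [sum_durfeeKauffmanWeights, Nat.add_sub_cancel_left]

variable {i}

theorem inf'_durfeeKauffmanWeights (hi : 1 ≤ i) :
    univ.inf' univ_nonempty (durfeeKauffmanWeights i k) = 1 := by
  refine le_antisymm (inf'_le _ (mem_univ 0)) (le_inf' _ _ fun j _ => ?_)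
  fin_cases j <;>
    simp only [durfeeKauffmanWeights, Fin.zero_eta, Fin.mk_one, Fin.reduceFinMk, Matrix.cons_val,
      Matrix.cons_val_zero, Matrix.cons_val_one] <;>
    nlinarith

end DurfeeKauffman

/-- **The Durfee–Kauffman family and the Lichnerowicz obstruction.**
For integers `i, k ≥ 1`, put `d = 2i(2k+1)` and `w = (1, 2i, i(2k+1), i(2k+1), i(2k+1))`.
Then (a) `f_i = z_0^{2i(2k+1)} + z_1^{2k+1} + z_2^2 + z_3^2 + z_4^2` is weighted
homogeneous of degree `d` with weights `w`; (b) the index `I = |w| − d` equals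
`2ik + 3i + 1`; and (c) `min_j w_j = 1` and `I > 4 · min_j w_j = n · min_j w_j`
(here `n = 4`), so the Lichnerowicz obstruction holds. -/
theorem durfee_kauffman_lichnerowicz_obstruction (i k : ℕ) (hi : 1 ≤ i) (hk : 1 ≤ k) :
    MvPolynomial.IsWeightedHomogeneous
      (![1, 2 * i, i * (2 * k + 1), i * (2 * k + 1), i * (2 * k + 1)] : Fin 5 → ℕ)
      ((MvPolynomial.X 0) ^ (2 * i * (2 * k + 1)) + (MvPolynomial.X 1) ^ (2 * k + 1) +
        (MvPolynomial.X 2) ^ 2 + (MvPolynomial.X 3) ^ 2 + (MvPolynomial.X 4) ^ 2 :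
        MvPolynomial (Fin 5) ℂ)
      (2 * i * (2 * k + 1)) ∧
    (∑ j, (![1, 2 * i, i * (2 * k + 1), i * (2 * k + 1), i * (2 * k + 1)] : Fin 5 → ℕ) j)
        - 2 * i * (2 * k + 1) = 2 * i * k + 3 * i + 1 ∧
    Finset.univ.inf' Finset.univ_nonempty
        (![1, 2 * i, i * (2 * k + 1), i * (2 * k + 1), i * (2 * k + 1)] : Fin 5 → ℕ) = 1 ∧
    4 * Finset.univ.inf' Finset.univ_nonempty
        (![1, 2 * i, i * (2 * k + 1), i * (2 * k + 1), i * (2 * k + 1)] : Fin 5 → ℕ)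
      < (∑ j, (![1, 2 * i, i * (2 * k + 1), i * (2 * k + 1), i * (2 * k + 1)] : Fin 5 → ℕ) j)
          - 2 * i * (2 * k + 1) := by
  have hindex := durfeeKauffman_index i k
  have hmin := inf'_durfeeKauffmanWeights k hi
  refine ⟨isWeightedHomogeneous_durfeeKauffman i k ℂ, hindex, hmin, ?_⟩
  change 4 * univ.inf' univ_nonempty (durfeeKauffmanWeights i k) <
    (∑ j, durfeeKauffmanWeights i k j) - 2 * i * (2 * k + 1)
  rw [hmin, hindex]
  nlinarith
end

section
/- Let m ≥ 4 be an integer and let a = (a_0,a_1,a_2,a_3,a_4) = (4m, 4, 4, 4, 4). For each j set C^j = lcm{a_i : i ≠ j} and b_j = gcd(a_j, C^j). Then b_j = 4 for every j, and the Kawamata log terminal inequality 1 < Σ_{i=0}^4 1/a_i < 1 + (4/3) · min( {1/a_i : 0 ≤ i ≤ 4} ∪ {1/(b_i b_j) : i ≠ j} ) holds; explicitly, 1 < 1 + 1/(4m) < 1 + (4/3)·(1/(4m)). (This is the numerical condition from which the paper concludes that the Brieskorn–Pham links L(4m,4,4,4,4), m ≥ 4, admit Sasaki–Einstein metrics.)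 -/
/-- **The klt condition for the Brieskorn–Pham links `L(4m, 4, 4, 4, 4)`, `m ≥ 4`.**
With `a = (4m, 4, 4, 4, 4)`, `C^j = lcm{a_i : i ≠ j}` and `b_j = gcd(a_j, C^j)`, one has
`b_j = 4` for every `j`, and the Kawamata log terminal inequality
`1 < Σ 1/a_i < 1 + (4/3) · min({1/a_i} ∪ {1/(b_i b_j) : i ≠ j})` holds; explicitly,
`1 < 1 + 1/(4m) < 1 + (4/3)·(1/(4m))`. -/
theorem klt_condition_L4m44444 (m : ℕ) (hm : 4 ≤ m)
    (a : Fin 5 → ℕ) (ha : a = ![4 * m, 4, 4, 4, 4])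
    (b : Fin 5 → ℕ)
    (hb : ∀ j, b j = Nat.gcd (a j) (Finset.lcm (Finset.univ.erase j) a)) :
    (∀ j, b j = 4) ∧
    (1 : ℚ) < ∑ i, (1 : ℚ) / a i ∧
    (∑ i, (1 : ℚ) / a i) < 1 + (4 / 3) *
      (Finset.univ.inf' Finset.univ_nonempty (fun i : Fin 5 => (1 : ℚ) / a i) ⊓
        (Finset.univ.filter (fun p : Fin 5 × Fin 5 => p.1 ≠ p.2)).inf'
          (by decide) (fun p => (1 : ℚ) / (b p.1 * b p.2))) ∧
    (∑ i, (1 : ℚ) / a i) = 1 + 1 / (4 * m) ∧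
    (1 : ℚ) < 1 + 1 / (4 * m) ∧
    (1 : ℚ) + 1 / (4 * m) < 1 + (4 / 3) * (1 / (4 * m)) := by
  subst ha
  have hmQ : (4 : ℚ) ≤ (m : ℚ) := by exact_mod_cast hm
  have hpos : (0 : ℚ) < 4 * (m : ℚ) := by linarith
  have hlcm : lcm (4 * m) 4 = 4 * m :=
    (lcm_eq_left_iff (4 * m) 4 (normalize_eq _)).mpr (dvd_mul_right 4 m)
  have hgcd : Nat.gcd 4 (4 * m) = 4 := Nat.gcd_eq_left (dvd_mul_right 4 m)
  -- b j = 4 for all j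
  have e0 : b 0 = 4 := by
    rw [hb 0, show ((Finset.univ.erase (0 : Fin 5))) = {1, 2, 3, 4} from by decide]
    simp only [Finset.lcm_insert, Finset.lcm_singleton, Matrix.cons_val_zero,
      Matrix.cons_val_one, Matrix.head_cons, Matrix.cons_val_two, Matrix.tail_cons,
      Matrix.cons_val_three, Matrix.cons_val_four]
    norm_num
  have e1 : b 1 = 4 := by
    rw [hb 1, show ((Finset.univ.erase (1 : Fin 5))) = {0, 2, 3, 4} from by decide]
    simp only [Finset.lcm_insert, Finset.lcm_singleton, Matrix.cons_val_zero,
      Matrix.cons_val_one, Matrix.head_cons, Matrix.cons_val_two, Matrix.tail_cons,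
      Matrix.cons_val_three, Matrix.cons_val_four]
    norm_num
    rw [hlcm]; exact hgcd
  have e2 : b 2 = 4 := by
    rw [hb 2, show ((Finset.univ.erase (2 : Fin 5))) = {0, 1, 3, 4} from by decide]
    simp only [Finset.lcm_insert, Finset.lcm_singleton, Matrix.cons_val_zero,
      Matrix.cons_val_one, Matrix.head_cons, Matrix.cons_val_two, Matrix.tail_cons,
      Matrix.cons_val_three, Matrix.cons_val_four]
    norm_num
    rw [hlcm]; exact hgcd
  have e3 : b 3 = 4 := by
    rw [hb 3, show ((Finset.univ.erase (3 : Fin 5))) = {0, 1, 2, 4} from by decide]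
    simp only [Finset.lcm_insert, Finset.lcm_singleton, Matrix.cons_val_zero,
      Matrix.cons_val_one, Matrix.head_cons, Matrix.cons_val_two, Matrix.tail_cons,
      Matrix.cons_val_three, Matrix.cons_val_four]
    norm_num
    rw [hlcm]; exact hgcd
  have e4 : b 4 = 4 := by
    rw [hb 4, show ((Finset.univ.erase (4 : Fin 5))) = {0, 1, 2, 3} from by decide]
    simp only [Finset.lcm_insert, Finset.lcm_singleton, Matrix.cons_val_zero,
      Matrix.cons_val_one, Matrix.head_cons, Matrix.cons_val_two, Matrix.tail_cons,
      Matrix.cons_val_three, Matrix.cons_val_four]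
    norm_num
    rw [hlcm]; exact hgcd
  have hbj : ∀ j, b j = 4 := by
    intro j; fin_cases j
    exacts [e0, e1, e2, e3, e4]
  -- bounds on the entries
  have habnd : ∀ i : Fin 5, 4 ≤ ![4 * m, 4, 4, 4, 4] i ∧ ![4 * m, 4, 4, 4, 4] i ≤ 4 * m := by
    intro i; fin_cases i <;> simp <;> omega
  -- the sum
  have hsum : (∑ i, (1 : ℚ) / (![4 * m, 4, 4, 4, 4] i : ℕ)) = 1 + 1 / (4 * (m : ℚ)) := by
    rw [Fin.sum_univ_five]
    simp only [Matrix.cons_val_zero, Matrix.cons_val_one, Matrix.head_cons,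
      Matrix.cons_val_two, Matrix.tail_cons, Matrix.cons_val_three, Matrix.cons_val_four]
    push_cast
    have : (1 : ℚ) / 4 + 1 / 4 + 1 / 4 + 1 / 4 = 1 := by norm_num
    linarith
  -- lower bound for the first inf'
  have hA : (1 : ℚ) / (4 * (m : ℚ)) ≤
      Finset.univ.inf' Finset.univ_nonempty
        (fun i : Fin 5 => (1 : ℚ) / (![4 * m, 4, 4, 4, 4] i : ℕ)) := by
    apply Finset.le_inf'
    intro i _
    have c1 : (4 : ℚ) ≤ ((![4 * m, 4, 4, 4, 4] i : ℕ) : ℚ) := by exact_mod_cast (habnd i).1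
    have c2 : ((![4 * m, 4, 4, 4, 4] i : ℕ) : ℚ) ≤ 4 * (m : ℚ) := by
      have := (habnd i).2
      push_cast
      exact_mod_cast this
    exact one_div_le_one_div_of_le (by linarith) c2
  -- lower bound for the second inf'
  have hB : (1 : ℚ) / (4 * (m : ℚ)) ≤
      (Finset.univ.filter (fun p : Fin 5 × Fin 5 => p.1 ≠ p.2)).inf'
        (by decide) (fun p => (1 : ℚ) / ((b p.1 : ℚ) * (b p.2 : ℚ))) := by
    apply Finset.le_inf'
    intro p _
    rw [hbj p.1, hbj p.2]
    push_cast
    apply one_div_le_one_div_of_le (by norm_num)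
    linarith
  have hmin : (1 : ℚ) / (4 * (m : ℚ)) ≤
      Finset.univ.inf' Finset.univ_nonempty
        (fun i : Fin 5 => (1 : ℚ) / (![4 * m, 4, 4, 4, 4] i : ℕ)) ⊓
      (Finset.univ.filter (fun p : Fin 5 × Fin 5 => p.1 ≠ p.2)).inf'
        (by decide) (fun p => (1 : ℚ) / ((b p.1 : ℚ) * (b p.2 : ℚ))) := le_inf hA hB
  have hfrac : (0 : ℚ) < 1 / (4 * (m : ℚ)) := by positivity
  refine ⟨hbj, ?_, ?_, by push_cast; exact hsum, ?_, ?_⟩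
  · rw [hsum]; linarith
  · rw [hsum]
    have h43 : (1 : ℚ) / (4 * (m : ℚ)) < (4 / 3) * (1 / (4 * (m : ℚ))) := by linarith
    calc (1 : ℚ) + 1 / (4 * (m : ℚ)) < 1 + (4 / 3) * (1 / (4 * (m : ℚ))) := by linarith
      _ ≤ _ := by nlinarith [hmin]
  · linarith
  · linarith
end

section
/- For all integers l ≥ 1 and k ≥ 1, the Milnor–Orlik number for weights w = (1, 2l, lk, lk) and degree d = 2lk equals k − 1; here u = (2lk, k, 2, 2) and v = (1,1,1,1), and the value k − 1 is independent of l and of the parity of k. (This is the combinatorial computation identifying the second Betti number of the corresponding 5-dimensional link as b_2 = k − 1, consistent with the underlying manifold being the connected sum (k−1)(S^2 × S^3).) -/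
/-- The numerator data of Milnor–Orlik: `u i = d / gcd(d, w i)`. -/
def moU (n : ℕ) (w : Fin (n + 1) → ℕ) (d : ℕ) (i : Fin (n + 1)) : ℕ :=
  d / Nat.gcd d (w i)

/-- The denominator data of Milnor–Orlik: `v i = w i / gcd(d, w i)`. -/
def moV (n : ℕ) (w : Fin (n + 1) → ℕ) (d : ℕ) (i : Fin (n + 1)) : ℕ :=
  w i / Nat.gcd d (w i)

/-- The Milnor–Orlik number
`B(w; d) = Σ_{S ⊆ {0,…,n}} (−1)^{n+1−|S|} (∏_{i∈S} u_i) / ((∏_{i∈S} v_i) · lcm{u_i : i ∈ S})`,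
where empty products and the empty lcm equal `1`.  By the Milnor–Orlik theorem this is
the Betti number `b_{n−1}` of the link `L_f(w, d)`. -/
def moB (n : ℕ) (w : Fin (n + 1) → ℕ) (d : ℕ) : ℚ :=
  ∑ S ∈ (Finset.univ : Finset (Fin (n + 1))).powerset,
    (-1 : ℚ) ^ (n + 1 - S.card) *
      ((∏ i ∈ S, moU n w d i : ℕ) : ℚ) /
      (((∏ i ∈ S, moV n w d i : ℕ) : ℚ) * ((S.lcm (moU n w d) : ℕ) : ℚ))

/-- **The second Betti number of the link with weights `(1, 2l, lk, lk)`, degree `2lk`.**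
For all `l, k ≥ 1`, the Milnor–Orlik number for `w = (1, 2l, lk, lk)` and `d = 2lk`
equals `k − 1`; here `u = (2lk, k, 2, 2)` and `v = (1, 1, 1, 1)`, and the value `k − 1`
is independent of `l` and of the parity of `k`, consistent with the underlying manifold
being `(k−1)(S^2 × S^3)`. -/
theorem milnorOrlik_km1_S2xS3 (l k : ℕ) (hl : 1 ≤ l) (hk : 1 ≤ k) :
    (∀ i, moU 3 ![1, 2 * l, l * k, l * k] (2 * l * k) i
        = (![2 * l * k, k, 2, 2] : Fin 4 → ℕ) i) ∧
    (∀ i, moV 3 ![1, 2 * l, l * k, l * k] (2 * l * k) i = 1) ∧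
    moB 3 ![1, 2 * l, l * k, l * k] (2 * l * k) = (k : ℚ) - 1 := by
  have hl0 : l ≠ 0 := by omega
  have hk0 : k ≠ 0 := by omega
  have g1 : Nat.gcd (2 * l * k) 1 = 1 := Nat.gcd_one_right _
  have g2 : Nat.gcd (2 * l * k) (2 * l) = 2 * l := Nat.gcd_eq_right ⟨k, by ring⟩
  have g3 : Nat.gcd (2 * l * k) (l * k) = l * k := Nat.gcd_eq_right ⟨2, by ring⟩
  have hU : ∀ i, moU 3 ![1, 2 * l, l * k, l * k] (2 * l * k) i
        = (![2 * l * k, k, 2, 2] : Fin 4 → ℕ) i := by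
    intro i
    have d2 : 2 * l * k / (2 * l) = k := Nat.mul_div_cancel_left k (by positivity)
    have d3 : 2 * l * k / (l * k) = 2 := by
      rw [show 2 * l * k = (l * k) * 2 from by ring]
      exact Nat.mul_div_cancel_left 2 (by positivity)
    fin_cases i <;> simp [moU, g1, g2, g3, d2, d3]
  have hV : ∀ i, moV 3 ![1, 2 * l, l * k, l * k] (2 * l * k) i = 1 := by
    intro i
    fin_cases i <;>
      simp [moV, g1, g2, g3, Nat.div_self, Nat.pos_of_ne_zero, hl0, hk0, Nat.mul_pos]
  refine ⟨hU, hV, ?_⟩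
  have hUf : moU 3 ![1, 2 * l, l * k, l * k] (2 * l * k) = ![2 * l * k, k, 2, 2] :=
    funext hU
  have hVf : moV 3 ![1, 2 * l, l * k, l * k] (2 * l * k) = fun _ => 1 := funext hV
  have lcm_eq : ∀ a b : ℕ, b ∣ a → Nat.lcm a b = a := fun a b h =>
    Nat.dvd_antisymm (Nat.lcm_dvd dvd_rfl h) (Nat.dvd_lcm_left a b)
  have hAk : Nat.lcm (2 * l * k) k = 2 * l * k := lcm_eq _ _ ⟨2 * l, by ring⟩
  have hA2 : Nat.lcm (2 * l * k) 2 = 2 * l * k := lcm_eq _ _ ⟨l * k, by ring⟩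
  have hAL : Nat.lcm (2 * l * k) (Nat.lcm k 2) = 2 * l * k :=
    lcm_eq _ _ (Nat.lcm_dvd ⟨2 * l, by ring⟩ ⟨l * k, by ring⟩)
  rw [moB, hUf, hVf,
    show (Finset.univ : Finset (Fin 4)) = insert 0 (insert 1 (insert 2 (insert 3 ∅))) from by decide,
    Finset.sum_powerset_insert (by decide)]
  repeat rw [Finset.sum_powerset_insert (by decide)]
  simp (config := { decide := true }) only [Finset.powerset_empty,
    Finset.sum_insert, Finset.sum_singleton, Finset.prod_insert, Finset.prod_empty,
    Finset.prod_singleton, Finset.lcm_insert, Finset.lcm_empty, Finset.lcm_singleton,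
    Finset.mem_insert, Finset.mem_singleton,
    Finset.card_insert_of_notMem, Finset.card_singleton, Finset.card_empty,
    Finset.notMem_empty, Matrix.cons_val_zero, Matrix.cons_val_one, Matrix.head_cons,
    Matrix.cons_val_two, Matrix.tail_cons, Matrix.cons_val_three, Matrix.head_fin_const,
    normalize_eq, Nat.lcm_self, hAk, hA2, hAL]
  simp only [lcm_eq_nat_lcm, Nat.lcm_one_right, Nat.lcm_self, hAk, hA2, hAL]
  have hL0 : ((Nat.lcm k 2 : ℕ) : ℚ) ≠ 0 := by
    exact_mod_cast Nat.lcm_ne_zero hk0 two_ne_zero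
  have hA0 : ((2 * l * k : ℕ) : ℚ) ≠ 0 := by
    exact_mod_cast Nat.mul_ne_zero (Nat.mul_ne_zero two_ne_zero hl0) hk0
  have hkQ : (k : ℚ) ≠ 0 := Nat.cast_ne_zero.mpr hk0
  push_cast at hA0 ⊢
  field_simp
  ring
end

section
/- The following 5-dimensional links are rational homology spheres (n = 3): (i) for every positive integer a with gcd(a,6) = 1, the Milnor–Orlik number B((6,2a,2a,3a); 6a) = 0; (ii) for every odd positive integer a, B((2,a,a,a); 2a) = 0; (iii) for every odd positive integer a, B((2,6a,10a,15a); 30a) = 0. (These compute the vanishing of the second Betti numbers of the links underlying the Smale manifolds M_1 and 4M_2 appearing in the paper's Table 2.) -/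

lemma sum_powerset_fin4 (f : Finset (Fin 4) → ℚ) :
    ∑ S ∈ (Finset.univ : Finset (Fin 4)).powerset, f S =
    f ∅ + f {0} + f {1} + f {2} + f {3} + f {0,1} + f {0,2} + f {0,3} + f {1,2} + f {1,3}
      + f {2,3} + f {0,1,2} + f {0,1,3} + f {0,2,3} + f {1,2,3} + f {0,1,2,3} := by
  rw [show (Finset.univ : Finset (Fin 4)).powerset =
    {∅, {0}, {1}, {2}, {3}, {0,1}, {0,2}, {0,3}, {1,2}, {1,3}, {2,3},
     {0,1,2}, {0,1,3}, {0,2,3}, {1,2,3}, {0,1,2,3}} from by decide]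
  simp (config := { decide := true }) [Finset.sum_insert]
  ring

lemma moB3_expand (w : Fin 4 → ℕ) (d : ℕ) :
    moB 3 w d =
      ((1) / ((1) * (1 : ℚ)))
      + -(((moU 3 w d 0 : ℚ)) / (((moV 3 w d 0 : ℚ)) * ((moU 3 w d 0 : ℕ) : ℚ)))
      + -(((moU 3 w d 1 : ℚ)) / (((moV 3 w d 1 : ℚ)) * ((moU 3 w d 1 : ℕ) : ℚ)))
      + -(((moU 3 w d 2 : ℚ)) / (((moV 3 w d 2 : ℚ)) * ((moU 3 w d 2 : ℕ) : ℚ)))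
      + -(((moU 3 w d 3 : ℚ)) / (((moV 3 w d 3 : ℚ)) * ((moU 3 w d 3 : ℕ) : ℚ)))
      + (((moU 3 w d 0 : ℚ) * (moU 3 w d 1 : ℚ)) / (((moV 3 w d 0 : ℚ) * (moV 3 w d 1 : ℚ)) * ((Nat.lcm (moU 3 w d 0) (moU 3 w d 1) : ℕ) : ℚ)))
      + (((moU 3 w d 0 : ℚ) * (moU 3 w d 2 : ℚ)) / (((moV 3 w d 0 : ℚ) * (moV 3 w d 2 : ℚ)) * ((Nat.lcm (moU 3 w d 0) (moU 3 w d 2) : ℕ) : ℚ)))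
      + (((moU 3 w d 0 : ℚ) * (moU 3 w d 3 : ℚ)) / (((moV 3 w d 0 : ℚ) * (moV 3 w d 3 : ℚ)) * ((Nat.lcm (moU 3 w d 0) (moU 3 w d 3) : ℕ) : ℚ)))
      + (((moU 3 w d 1 : ℚ) * (moU 3 w d 2 : ℚ)) / (((moV 3 w d 1 : ℚ) * (moV 3 w d 2 : ℚ)) * ((Nat.lcm (moU 3 w d 1) (moU 3 w d 2) : ℕ) : ℚ)))
      + (((moU 3 w d 1 : ℚ) * (moU 3 w d 3 : ℚ)) / (((moV 3 w d 1 : ℚ) * (moV 3 w d 3 : ℚ)) * ((Nat.lcm (moU 3 w d 1) (moU 3 w d 3) : ℕ) : ℚ)))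
      + (((moU 3 w d 2 : ℚ) * (moU 3 w d 3 : ℚ)) / (((moV 3 w d 2 : ℚ) * (moV 3 w d 3 : ℚ)) * ((Nat.lcm (moU 3 w d 2) (moU 3 w d 3) : ℕ) : ℚ)))
      + -(((moU 3 w d 0 : ℚ) * (moU 3 w d 1 : ℚ) * (moU 3 w d 2 : ℚ)) / (((moV 3 w d 0 : ℚ) * (moV 3 w d 1 : ℚ) * (moV 3 w d 2 : ℚ)) * ((Nat.lcm (moU 3 w d 0) (Nat.lcm (moU 3 w d 1) (moU 3 w d 2)) : ℕ) : ℚ)))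
      + -(((moU 3 w d 0 : ℚ) * (moU 3 w d 1 : ℚ) * (moU 3 w d 3 : ℚ)) / (((moV 3 w d 0 : ℚ) * (moV 3 w d 1 : ℚ) * (moV 3 w d 3 : ℚ)) * ((Nat.lcm (moU 3 w d 0) (Nat.lcm (moU 3 w d 1) (moU 3 w d 3)) : ℕ) : ℚ)))
      + -(((moU 3 w d 0 : ℚ) * (moU 3 w d 2 : ℚ) * (moU 3 w d 3 : ℚ)) / (((moV 3 w d 0 : ℚ) * (moV 3 w d 2 : ℚ) * (moV 3 w d 3 : ℚ)) * ((Nat.lcm (moU 3 w d 0) (Nat.lcm (moU 3 w d 2) (moU 3 w d 3)) : ℕ) : ℚ)))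
      + -(((moU 3 w d 1 : ℚ) * (moU 3 w d 2 : ℚ) * (moU 3 w d 3 : ℚ)) / (((moV 3 w d 1 : ℚ) * (moV 3 w d 2 : ℚ) * (moV 3 w d 3 : ℚ)) * ((Nat.lcm (moU 3 w d 1) (Nat.lcm (moU 3 w d 2) (moU 3 w d 3)) : ℕ) : ℚ)))
      + (((moU 3 w d 0 : ℚ) * (moU 3 w d 1 : ℚ) * (moU 3 w d 2 : ℚ) * (moU 3 w d 3 : ℚ)) / (((moV 3 w d 0 : ℚ) * (moV 3 w d 1 : ℚ) * (moV 3 w d 2 : ℚ) * (moV 3 w d 3 : ℚ)) * ((Nat.lcm (moU 3 w d 0) (Nat.lcm (moU 3 w d 1) (Nat.lcm (moU 3 w d 2) (moU 3 w d 3))) : ℕ) : ℚ))) := by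
  rw [moB, sum_powerset_fin4]
  have h01 : (0:Fin 4) ∉ ({1} : Finset (Fin 4)) := by decide
  have h012 : (0:Fin 4) ∉ ({1,2} : Finset (Fin 4)) := by decide
  have h12 : (1:Fin 4) ∉ ({2} : Finset (Fin 4)) := by decide
  have h0123 : (0:Fin 4) ∉ ({1,2,3} : Finset (Fin 4)) := by decide
  have h123 : (1:Fin 4) ∉ ({2,3} : Finset (Fin 4)) := by decide
  have h23 : (2:Fin 4) ∉ ({3} : Finset (Fin 4)) := by decide
  have h02 : (0:Fin 4) ∉ ({2} : Finset (Fin 4)) := by decide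
  have h03 : (0:Fin 4) ∉ ({3} : Finset (Fin 4)) := by decide
  have h13 : (1:Fin 4) ∉ ({3} : Finset (Fin 4)) := by decide
  have h013 : (0:Fin 4) ∉ ({1,3} : Finset (Fin 4)) := by decide
  have h023 : (0:Fin 4) ∉ ({2,3} : Finset (Fin 4)) := by decide
  simp only [Finset.sum_insert, Finset.prod_insert, Finset.lcm_insert,
    Finset.prod_singleton, Finset.lcm_singleton, Finset.prod_empty, Finset.lcm_empty,
    Finset.card_empty, Finset.card_singleton,
    Finset.card_insert_of_notMem,
    h01, h012, h12, h0123, h123, h23, h02, h03, h13, h013, h023,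
    not_false_iff, lcm_eq_nat_lcm, normalize_eq]
  push_cast
  norm_num
  ring

lemma nat_gcd_eq_right' {m n : ℕ} (h : n ∣ m) : Nat.gcd m n = n :=
  Nat.gcd_eq_right h

lemma nat_lcm_left_of_dvd {m n : ℕ} (h : n ∣ m) : Nat.lcm m n = m :=
  Nat.dvd_antisymm (Nat.lcm_dvd dvd_rfl h) (Nat.dvd_lcm_left m n)

/-- **Three families of 5-dimensional links that are rational homology spheres.**
(i) `B((6, 2a, 2a, 3a); 6a) = 0` for all `a ≥ 1` with `gcd(a, 6) = 1`;
(ii) `B((2, a, a, a); 2a) = 0` for all odd `a ≥ 1`;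
(iii) `B((2, 6a, 10a, 15a); 30a) = 0` for all odd `a ≥ 1`.
These compute the vanishing of the second Betti numbers of the links underlying the
Smale manifolds `M_1` and `4M_2`. -/
theorem milnorOrlik_rational_homology_spheres :
    (∀ a : ℕ, 1 ≤ a → Nat.gcd a 6 = 1 →
      moB 3 ![6, 2 * a, 2 * a, 3 * a] (6 * a) = 0) ∧
    (∀ a : ℕ, 1 ≤ a → Odd a →
      moB 3 ![2, a, a, a] (2 * a) = 0) ∧
    (∀ a : ℕ, 1 ≤ a → Odd a →
      moB 3 ![2, 6 * a, 10 * a, 15 * a] (30 * a) = 0) := by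
  refine ⟨?_, ?_, ?_⟩
  · -- part (i)
    intro a ha hg
    have hapos : 0 < a := ha
    have haQ : (a : ℚ) ≠ 0 := by positivity
    have h2a : 0 < 2 * a := by omega
    have h3a : 0 < 3 * a := by omega
    have ca6 : Nat.Coprime a 6 := hg
    have ca3 : Nat.Coprime a 3 := ca6.coprime_dvd_right (by norm_num)
    have ca2 : Nat.Coprime a 2 := ca6.coprime_dvd_right (by norm_num)
    have g0 : Nat.gcd (6 * a) 6 = 6 := nat_gcd_eq_right' ⟨a, rfl⟩
    have g1 : Nat.gcd (6 * a) (2 * a) = 2 * a := nat_gcd_eq_right' ⟨3, by ring⟩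
    have g3 : Nat.gcd (6 * a) (3 * a) = 3 * a := nat_gcd_eq_right' ⟨2, by ring⟩
    have hu0 : moU 3 ![6, 2 * a, 2 * a, 3 * a] (6 * a) 0 = a := by
      show 6 * a / Nat.gcd (6 * a) 6 = a
      rw [g0, Nat.mul_div_cancel_left a (by norm_num)]
    have hu1 : moU 3 ![6, 2 * a, 2 * a, 3 * a] (6 * a) 1 = 3 := by
      show 6 * a / Nat.gcd (6 * a) (2 * a) = 3
      rw [g1, show 6 * a = 3 * (2 * a) from by ring, Nat.mul_div_cancel 3 h2a]
    have hu2 : moU 3 ![6, 2 * a, 2 * a, 3 * a] (6 * a) 2 = 3 := by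
      show 6 * a / Nat.gcd (6 * a) (2 * a) = 3
      rw [g1, show 6 * a = 3 * (2 * a) from by ring, Nat.mul_div_cancel 3 h2a]
    have hu3 : moU 3 ![6, 2 * a, 2 * a, 3 * a] (6 * a) 3 = 2 := by
      show 6 * a / Nat.gcd (6 * a) (3 * a) = 2
      rw [g3, show 6 * a = 2 * (3 * a) from by ring, Nat.mul_div_cancel 2 h3a]
    have hv0 : moV 3 ![6, 2 * a, 2 * a, 3 * a] (6 * a) 0 = 1 := by
      show 6 / Nat.gcd (6 * a) 6 = 1
      rw [g0]
    have hv1 : moV 3 ![6, 2 * a, 2 * a, 3 * a] (6 * a) 1 = 1 := by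
      show 2 * a / Nat.gcd (6 * a) (2 * a) = 1
      rw [g1, Nat.div_self h2a]
    have hv2 : moV 3 ![6, 2 * a, 2 * a, 3 * a] (6 * a) 2 = 1 := by
      show 2 * a / Nat.gcd (6 * a) (2 * a) = 1
      rw [g1, Nat.div_self h2a]
    have hv3 : moV 3 ![6, 2 * a, 2 * a, 3 * a] (6 * a) 3 = 1 := by
      show 3 * a / Nat.gcd (6 * a) (3 * a) = 1
      rw [g3, Nat.div_self h3a]
    rw [moB3_expand, hu0, hu1, hu2, hu3, hv0, hv1, hv2, hv3]
    have l33 : Nat.lcm 3 3 = 3 := Nat.lcm_self 3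
    have l32 : Nat.lcm 3 2 = 6 := by decide
    have l36 : Nat.lcm 3 6 = 6 := by decide
    have la3 : Nat.lcm a 3 = a * 3 := ca3.lcm_eq_mul
    have la2 : Nat.lcm a 2 = a * 2 := ca2.lcm_eq_mul
    have la6 : Nat.lcm a 6 = a * 6 := ca6.lcm_eq_mul
    simp only [l33, l32, l36, la3, la2, la6]
    push_cast
    field_simp
    ring
  · -- part (ii)
    intro a ha hodd
    have hapos : 0 < a := ha
    have haQ : (a : ℚ) ≠ 0 := by positivity
    have ca2 : Nat.Coprime a 2 := hodd.coprime_two_right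
    have g0 : Nat.gcd (2 * a) 2 = 2 := nat_gcd_eq_right' ⟨a, rfl⟩
    have g1 : Nat.gcd (2 * a) a = a := nat_gcd_eq_right' ⟨2, by ring⟩
    have hu0 : moU 3 ![2, a, a, a] (2 * a) 0 = a := by
      show 2 * a / Nat.gcd (2 * a) 2 = a
      rw [g0, Nat.mul_div_cancel_left a (by norm_num)]
    have hu1 : moU 3 ![2, a, a, a] (2 * a) 1 = 2 := by
      show 2 * a / Nat.gcd (2 * a) a = 2
      rw [g1, Nat.mul_div_cancel 2 hapos]
    have hu2 : moU 3 ![2, a, a, a] (2 * a) 2 = 2 := by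
      show 2 * a / Nat.gcd (2 * a) a = 2
      rw [g1, Nat.mul_div_cancel 2 hapos]
    have hu3 : moU 3 ![2, a, a, a] (2 * a) 3 = 2 := by
      show 2 * a / Nat.gcd (2 * a) a = 2
      rw [g1, Nat.mul_div_cancel 2 hapos]
    have hv0 : moV 3 ![2, a, a, a] (2 * a) 0 = 1 := by
      show 2 / Nat.gcd (2 * a) 2 = 1
      rw [g0]
    have hv1 : moV 3 ![2, a, a, a] (2 * a) 1 = 1 := by
      show a / Nat.gcd (2 * a) a = 1
      rw [g1, Nat.div_self hapos]
    have hv2 : moV 3 ![2, a, a, a] (2 * a) 2 = 1 := by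
      show a / Nat.gcd (2 * a) a = 1
      rw [g1, Nat.div_self hapos]
    have hv3 : moV 3 ![2, a, a, a] (2 * a) 3 = 1 := by
      show a / Nat.gcd (2 * a) a = 1
      rw [g1, Nat.div_self hapos]
    rw [moB3_expand, hu0, hu1, hu2, hu3, hv0, hv1, hv2, hv3]
    have l22 : Nat.lcm 2 2 = 2 := Nat.lcm_self 2
    have la2 : Nat.lcm a 2 = a * 2 := ca2.lcm_eq_mul
    simp only [l22, la2]
    push_cast
    field_simp
    ring
  · -- part (iii)
    intro a ha hodd
    have hapos : 0 < a := ha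
    have haQ : (a : ℚ) ≠ 0 := by positivity
    have ca2 : Nat.Coprime a 2 := hodd.coprime_two_right
    have h6a : 0 < 6 * a := by omega
    have h10a : 0 < 10 * a := by omega
    have h15a : 0 < 15 * a := by omega
    have g0 : Nat.gcd (30 * a) 2 = 2 := nat_gcd_eq_right' ⟨15 * a, by ring⟩
    have g1 : Nat.gcd (30 * a) (6 * a) = 6 * a := nat_gcd_eq_right' ⟨5, by ring⟩
    have g2 : Nat.gcd (30 * a) (10 * a) = 10 * a := nat_gcd_eq_right' ⟨3, by ring⟩
    have g3 : Nat.gcd (30 * a) (15 * a) = 15 * a := nat_gcd_eq_right' ⟨2, by ring⟩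
    have hu0 : moU 3 ![2, 6 * a, 10 * a, 15 * a] (30 * a) 0 = 15 * a := by
      show 30 * a / Nat.gcd (30 * a) 2 = 15 * a
      rw [g0, show 30 * a = 2 * (15 * a) from by ring, Nat.mul_div_cancel_left _ (by norm_num)]
    have hu1 : moU 3 ![2, 6 * a, 10 * a, 15 * a] (30 * a) 1 = 5 := by
      show 30 * a / Nat.gcd (30 * a) (6 * a) = 5
      rw [g1, show 30 * a = 5 * (6 * a) from by ring, Nat.mul_div_cancel 5 h6a]
    have hu2 : moU 3 ![2, 6 * a, 10 * a, 15 * a] (30 * a) 2 = 3 := by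
      show 30 * a / Nat.gcd (30 * a) (10 * a) = 3
      rw [g2, show 30 * a = 3 * (10 * a) from by ring, Nat.mul_div_cancel 3 h10a]
    have hu3 : moU 3 ![2, 6 * a, 10 * a, 15 * a] (30 * a) 3 = 2 := by
      show 30 * a / Nat.gcd (30 * a) (15 * a) = 2
      rw [g3, show 30 * a = 2 * (15 * a) from by ring, Nat.mul_div_cancel 2 h15a]
    have hv0 : moV 3 ![2, 6 * a, 10 * a, 15 * a] (30 * a) 0 = 1 := by
      show 2 / Nat.gcd (30 * a) 2 = 1
      rw [g0]
    have hv1 : moV 3 ![2, 6 * a, 10 * a, 15 * a] (30 * a) 1 = 1 := by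
      show 6 * a / Nat.gcd (30 * a) (6 * a) = 1
      rw [g1, Nat.div_self h6a]
    have hv2 : moV 3 ![2, 6 * a, 10 * a, 15 * a] (30 * a) 2 = 1 := by
      show 10 * a / Nat.gcd (30 * a) (10 * a) = 1
      rw [g2, Nat.div_self h10a]
    have hv3 : moV 3 ![2, 6 * a, 10 * a, 15 * a] (30 * a) 3 = 1 := by
      show 15 * a / Nat.gcd (30 * a) (15 * a) = 1
      rw [g3, Nat.div_self h15a]
    rw [moB3_expand, hu0, hu1, hu2, hu3, hv0, hv1, hv2, hv3]
    -- lcm computations, innermost first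
    have l32 : Nat.lcm 3 2 = 6 := by decide
    have l53 : Nat.lcm 5 3 = 15 := by decide
    have l52 : Nat.lcm 5 2 = 10 := by decide
    have l56 : Nat.lcm 5 6 = 30 := by decide
    have c15a2 : Nat.Coprime (15 * a) 2 := by
      refine Nat.Coprime.mul ?_ ca2
      decide
    have l15a5 : Nat.lcm (15 * a) 5 = 15 * a := nat_lcm_left_of_dvd ⟨3 * a, by ring⟩
    have l15a3 : Nat.lcm (15 * a) 3 = 15 * a := nat_lcm_left_of_dvd ⟨5 * a, by ring⟩
    have l15a2 : Nat.lcm (15 * a) 2 = 15 * a * 2 := c15a2.lcm_eq_mul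
    have l15a15 : Nat.lcm (15 * a) 15 = 15 * a := nat_lcm_left_of_dvd ⟨a, by ring⟩
    have l15a10 : Nat.lcm (15 * a) 10 = 30 * a := by
      have : Nat.gcd (15 * a) 10 = 5 := by
        rw [show 15 * a = 5 * (3 * a) from by ring, show (10 : ℕ) = 5 * 2 from rfl,
          Nat.gcd_mul_left]
        have : Nat.Coprime (3 * a) 2 := Nat.Coprime.mul (by decide) ca2
        rw [this]
      rw [Nat.lcm, this, show 15 * a * 10 = 30 * a * 5 from by ring,
        Nat.mul_div_cancel _ (by norm_num)]
    have l15a6 : Nat.lcm (15 * a) 6 = 30 * a := by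
      have : Nat.gcd (15 * a) 6 = 3 := by
        rw [show 15 * a = 3 * (5 * a) from by ring, show (6 : ℕ) = 3 * 2 from rfl,
          Nat.gcd_mul_left]
        have : Nat.Coprime (5 * a) 2 := Nat.Coprime.mul (by decide) ca2
        rw [this]
      rw [Nat.lcm, this, show 15 * a * 6 = 30 * a * 3 from by ring,
        Nat.mul_div_cancel _ (by norm_num)]
    have l15a30 : Nat.lcm (15 * a) 30 = 30 * a := by
      have : Nat.gcd (15 * a) 30 = 15 := by
        rw [show 15 * a = 15 * a from rfl, show (30 : ℕ) = 15 * 2 from rfl,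
          Nat.gcd_mul_left, ca2]
      rw [Nat.lcm, this, show 15 * a * 30 = 30 * a * 15 from by ring,
        Nat.mul_div_cancel _ (by norm_num)]
    simp only [l32, l53, l52, l56, l15a5, l15a3, l15a2, l15a15, l15a10, l15a6, l15a30]
    push_cast
    field_simp
    ring
end
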